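/- (Quantitative fourth moment theorem for infinitely divisible laws) Let μ be an infinitely divisible (with respect to classical convolution) probability measure on ℝ with mean 0, variance 1, and finite fourth moment m₄. Then d_Kol(μ, Φ) ≤ C·√(m₄ - 3), where C is the Berry–Esseen constant and Φ is the standard normal distribution function. -/

import Mathlib

open MeasureTheory ProbabilityTheory

/-- `N`-fold classical convolution power of a measure on `ℝ`
(with the convention that the 0-th power is `δ₀`). -/
noncomputable def convNPow (ν : Measure ℝ) : ℕ → Measure ℝ
  | 0 => Measure.dirac 0
  | n + 1 => Measure.conv (convNPow ν n) ν

/-- Kolmogorov (sup) distance between two measures on `ℝ`,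
via their distribution functions. -/
noncomputable def kolDist (μ ν : Measure ℝ) : ℝ :=
  ⨆ x : ℝ, |cdf μ x - cdf ν x|

/-! Write `μ = ν^{*n}`. Then `ν` is centred with variance `1/n`. Under `n`-fold convolution
the moments of a centred law transform as `m₂ ↦ n m₂` and `m₄ ↦ n m₄ + 3n(n-1) m₂²`, so the
fourth moment of `ν` is `(m₄ - 3 + 3/n)/n`. Berry–Esseen for the `n`-fold convolution, with
the Cauchy–Schwarz bound `(E|X|³)² ≤ E X² · E X⁴`, gives
`d_Kol(μ, Φ) ≤ C n E_ν|X|³ ≤ C √(n E_ν X⁴) = C √(m₄ - 3 + 3/n)`; let `n → ∞`. -/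

lemma memLp_of_integrable_norm_pow {α E : Type*} [MeasurableSpace α] [NormedAddCommGroup E]
    {μ : Measure α} {f : α → E} {k : ℕ} (hk : k ≠ 0) (hf : AEStronglyMeasurable f μ)
    (h : Integrable (fun x => ‖f x‖ ^ k) μ) : MemLp f k μ := by
  rw [← integrable_norm_rpow_iff hf (by exact_mod_cast hk) (by simp)]
  simpa using h

section Moments

open Finset

variable {μ ν : Measure ℝ}

lemma MeasureTheory.MemLp.integrable_abs_pow_of_le [IsFiniteMeasure μ] {k j : ℕ}
    (h : MemLp id k μ) (hj : j ≤ k) : Integrable (fun x : ℝ => |x| ^ j) μ :=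
  (h.mono_exponent (by exact_mod_cast hj)).integrable_norm_pow'

lemma MeasureTheory.MemLp.integrable_pow_of_le [IsFiniteMeasure μ] {k j : ℕ}
    (h : MemLp id k μ) (hj : j ≤ k) : Integrable (fun x : ℝ => x ^ j) μ :=
  (integrable_norm_iff (by fun_prop)).mp <| by
    simpa only [Real.norm_eq_abs, abs_pow] using h.integrable_abs_pow_of_le hj

lemma memLp_id_conv [IsProbabilityMeasure μ] [IsProbabilityMeasure ν] {p : ENNReal}
    (hμ : MemLp id p μ) (hν : MemLp id p ν) : MemLp id p (μ ∗ ν) := by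
  rw [Measure.conv, memLp_map_measure_iff (by fun_prop) (by fun_prop)]
  exact (hμ.comp_measurePreserving measurePreserving_fst).add
    (hν.comp_measurePreserving measurePreserving_snd)

lemma MeasureTheory.MemLp.of_conv_right [IsProbabilityMeasure μ] [IsProbabilityMeasure ν] {k : ℕ}
    (h : MemLp id k (μ ∗ ν)) : MemLp id k ν := by
  rcases eq_or_ne k 0 with rfl | hk
  · simpa using aestronglyMeasurable_id
  obtain ⟨x₀, hx₀⟩ := ((integrable_conv_iff (by fun_prop)).mp (h.integrable_norm_pow hk)).1.exists
  have hshift : MemLp (fun y => x₀ + y) k ν := memLp_of_integrable_norm_pow hk (by fun_prop) hx₀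
  convert hshift.sub (memLp_const x₀) using 1
  ext y
  simp

lemma integral_pow_conv [IsProbabilityMeasure μ] [IsProbabilityMeasure ν] {k : ℕ}
    (hμ : MemLp id k μ) (hν : MemLp id k ν) :
    ∫ x, x ^ k ∂(μ ∗ ν) =
      ∑ j ∈ range (k + 1), (∫ x, x ^ j ∂μ) * (∫ x, x ^ (k - j) ∂ν) * k.choose j := by
  have hterm : ∀ j ∈ range (k + 1), Integrable
      (fun p : ℝ × ℝ => p.1 ^ j * p.2 ^ (k - j) * k.choose j) (μ.prod ν) := fun j hj =>
    ((hμ.integrable_pow_of_le (mem_range_succ_iff.mp hj)).mul_prod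
      (hν.integrable_pow_of_le (Nat.sub_le k j))).mul_const _
  rw [Measure.conv, integral_map (by fun_prop) (by fun_prop)]
  simp_rw [add_pow]
  rw [integral_finsetSum _ hterm]
  refine sum_congr rfl fun j _ => ?_
  rw [integral_mul_const, integral_prod_mul (fun x : ℝ => x ^ j) (fun y : ℝ => y ^ (k - j))]

lemma integral_id_conv [IsProbabilityMeasure μ] [IsProbabilityMeasure ν]
    (hμ : MemLp id 1 μ) (hν : MemLp id 1 ν) :
    ∫ x, x ∂(μ ∗ ν) = ∫ x, x ∂μ + ∫ x, x ∂ν := by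
  have := integral_pow_conv (k := 1) (by simpa using hμ) (by simpa using hν)
  norm_num [sum_range_succ] at this
  linarith

lemma integral_sq_conv [IsProbabilityMeasure μ] [IsProbabilityMeasure ν]
    (hμ : MemLp id 2 μ) (hν : MemLp id 2 ν) (hμ0 : ∫ x, x ∂μ = 0) (hν0 : ∫ x, x ∂ν = 0) :
    ∫ x, x ^ 2 ∂(μ ∗ ν) = ∫ x, x ^ 2 ∂μ + ∫ x, x ^ 2 ∂ν := by
  rw [integral_pow_conv hμ hν]
  norm_num [sum_range_succ, hμ0, hν0, add_comm]

lemma integral_pow_four_conv [IsProbabilityMeasure μ] [IsProbabilityMeasure ν]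
    (hμ : MemLp id 4 μ) (hν : MemLp id 4 ν) (hμ0 : ∫ x, x ∂μ = 0) (hν0 : ∫ x, x ∂ν = 0) :
    ∫ x, x ^ 4 ∂(μ ∗ ν) =
      ∫ x, x ^ 4 ∂μ + 6 * (∫ x, x ^ 2 ∂μ) * (∫ x, x ^ 2 ∂ν) + ∫ x, x ^ 4 ∂ν := by
  rw [integral_pow_conv hμ hν]
  norm_num [sum_range_succ, hμ0, hν0, Nat.choose]
  ring

lemma sq_integral_abs_pow_three_le [IsFiniteMeasure μ] (h : MemLp id 4 μ) :
    (∫ x, |x| ^ 3 ∂μ) ^ 2 ≤ (∫ x, x ^ 2 ∂μ) * ∫ x, x ^ 4 ∂μ := by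
  have h2 := h.integrable_pow_of_le (j := 2) (by norm_num)
  have h3 := h.integrable_abs_pow_of_le (j := 3) (by norm_num)
  have h4 := h.integrable_pow_of_le le_rfl
  -- `t ↦ ∫ (t |x| - x²)²` is a nonnegative quadratic polynomial, so its discriminant is `≤ 0`.
  have hquad : ∀ t : ℝ, 0 ≤ (∫ x, x ^ 2 ∂μ) * (t * t) + (-2 * ∫ x, |x| ^ 3 ∂μ) * t
      + ∫ x, x ^ 4 ∂μ := fun t => by
    have hexpand : ∀ x : ℝ, (t * |x| - x ^ 2) ^ 2 = (t * t) * x ^ 2 + (-2 * t) * |x| ^ 3 + x ^ 4 :=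
      fun x => by
        rw [show x ^ 4 = (x ^ 2) ^ 2 by ring, ← sq_abs x]
        ring
    calc (0 : ℝ) ≤ ∫ x, (t * |x| - x ^ 2) ^ 2 ∂μ := integral_nonneg fun x => sq_nonneg _
      _ = _ := by
        simp_rw [hexpand]
        rw [integral_add (by exact (h2.const_mul _).add (h3.const_mul _)) h4,
          integral_add (h2.const_mul _) (h3.const_mul _), integral_const_mul, integral_const_mul]
        ring
  have := discrim_le_zero hquad
  rw [discrim] at this
  linarith

lemma integral_abs_pow_three_pos (h3 : Integrable (fun x : ℝ => |x| ^ 3) μ)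
    (h2 : Integrable (fun x : ℝ => x ^ 2) μ) (hvar : 0 < ∫ x, x ^ 2 ∂μ) :
    0 < ∫ x, |x| ^ 3 ∂μ := by
  rw [integral_pos_iff_support_of_nonneg (fun x => by positivity) h2] at hvar
  rwa [integral_pos_iff_support_of_nonneg (fun x => by positivity) h3,
    show Function.support (fun x : ℝ => |x| ^ 3) = Function.support (fun x : ℝ => x ^ 2) by
      ext x; simp]

end Moments

section ConvolutionPowers

variable {ν : Measure ℝ}

lemma convNPow_succ (n : ℕ) : convNPow ν (n + 1) = convNPow ν n ∗ ν := rfl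

instance isProbabilityMeasure_convNPow [IsProbabilityMeasure ν] (n : ℕ) :
    IsProbabilityMeasure (convNPow ν n) := by
  induction n with
  | zero => exact Measure.dirac.isProbabilityMeasure
  | succ n _ => exact Measure.probabilitymeasure_of_probabilitymeasures_conv _ _

variable [IsProbabilityMeasure ν]

lemma memLp_id_convNPow {p : ENNReal} (h : MemLp id p ν) (n : ℕ) :
    MemLp id p (convNPow ν n) := by
  induction n with
  | zero => exact (memLp_const (0 : ℝ)).ae_eq (by rw [convNPow, ae_dirac_eq]; rfl)
  | succ n ih => exact memLp_id_conv ih h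

lemma MeasureTheory.MemLp.of_convNPow {k n : ℕ} (hn : n ≠ 0) (h : MemLp id k (convNPow ν n)) :
    MemLp id k ν := by
  obtain ⟨m, rfl⟩ := Nat.exists_eq_succ_of_ne_zero hn
  exact h.of_conv_right

lemma integral_id_convNPow (h : MemLp id 1 ν) (n : ℕ) :
    ∫ x, x ∂(convNPow ν n) = n * ∫ x, x ∂ν := by
  induction n with
  | zero => simp [convNPow]
  | succ n ih =>
    rw [convNPow_succ, integral_id_conv (memLp_id_convNPow h n) h, ih]
    push_cast
    ring

lemma integral_id_convNPow_eq_zero (h : MemLp id 1 ν) (hmean : ∫ x, x ∂ν = 0) (n : ℕ) :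
    ∫ x, x ∂(convNPow ν n) = 0 := by
  rw [integral_id_convNPow h, hmean, mul_zero]

lemma integral_sq_convNPow (h : MemLp id 2 ν) (hmean : ∫ x, x ∂ν = 0) (n : ℕ) :
    ∫ x, x ^ 2 ∂(convNPow ν n) = n * ∫ x, x ^ 2 ∂ν := by
  have h1 : MemLp id 1 ν := h.mono_exponent (by norm_num)
  induction n with
  | zero => simp [convNPow]
  | succ n ih =>
    rw [convNPow_succ, integral_sq_conv (memLp_id_convNPow h n) h
      (integral_id_convNPow_eq_zero h1 hmean n) hmean, ih]
    push_cast
    ring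

lemma integral_pow_four_convNPow (h : MemLp id 4 ν) (hmean : ∫ x, x ∂ν = 0) (n : ℕ) :
    ∫ x, x ^ 4 ∂(convNPow ν n) =
      n * ∫ x, x ^ 4 ∂ν + 3 * n * (n - 1) * (∫ x, x ^ 2 ∂ν) ^ 2 := by
  have h1 : MemLp id 1 ν := h.mono_exponent (by norm_num)
  induction n with
  | zero => simp [convNPow]
  | succ n ih =>
    rw [convNPow_succ, integral_pow_four_conv (memLp_id_convNPow h n) h
      (integral_id_convNPow_eq_zero h1 hmean n) hmean, ih,
      integral_sq_convNPow (h.mono_exponent (by norm_num)) hmean]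
    push_cast
    ring

end ConvolutionPowers

def BerryEsseenBound (C : ℝ) : Prop :=
  ∀ (ρ : Measure ℝ), IsProbabilityMeasure ρ → ∀ n : ℕ, 0 < n →
    (∫ x, x ∂ρ = 0) → 0 < ∫ x, x ^ 2 ∂ρ →
    Integrable (fun x => |x| ^ 3) ρ →
    kolDist
      (Measure.map
        (fun x => x / (Real.sqrt (∫ x, x ^ 2 ∂ρ) * Real.sqrt n))
        (convNPow ρ n))
      (gaussianReal 0 1) ≤
      C * (∫ x, |x| ^ 3 ∂ρ) /
        (Real.sqrt (∫ x, x ^ 2 ∂ρ) ^ 3 * Real.sqrt n)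

lemma kolDist_nonneg (μ ν : Measure ℝ) : 0 ≤ kolDist μ ν :=
  Real.iSup_nonneg fun _ => abs_nonneg _

namespace BerryEsseenBound

variable {C : ℝ} (hBE : BerryEsseenBound C) {ν : Measure ℝ} [IsProbabilityMeasure ν] {n : ℕ}
include hBE

lemma kolDist_convNPow_le (hn : 0 < n) (hmean : ∫ x, x ∂ν = 0)
    (hvar : n * ∫ x, x ^ 2 ∂ν = 1) (h3 : Integrable (fun x => |x| ^ 3) ν) :
    kolDist (convNPow ν n) (gaussianReal 0 1) ≤ C * (n * ∫ x, |x| ^ 3 ∂ν) := by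
  have hb : 0 < ∫ x, x ^ 2 ∂ν := pos_of_mul_pos_right (hvar ▸ one_pos) (Nat.cast_nonneg n)
  have hscale : √(∫ x, x ^ 2 ∂ν) * √n = 1 := by
    rw [← Real.sqrt_mul hb.le, mul_comm, hvar, Real.sqrt_one]
  have hcube : √(∫ x, x ^ 2 ∂ν) ^ 3 * √n = ∫ x, x ^ 2 ∂ν := by
    rw [pow_succ, mul_assoc, hscale, mul_one, Real.sq_sqrt hb.le]
  have hBEν := hBE ν ‹_› n hn hmean hb h3
  rw [hscale, hcube] at hBEν
  simp only [div_one, Measure.map_id'] at hBEν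
  convert hBEν using 1
  field_simp
  linear_combination (C * ∫ x, |x| ^ 3 ∂ν) * hvar

lemma kolDist_convNPow_le_sqrt (hn : 0 < n) (hmean : ∫ x, x ∂(convNPow ν n) = 0)
    (hvar : ∫ x, x ^ 2 ∂(convNPow ν n) = 1) (h4 : MemLp id 4 (convNPow ν n)) :
    kolDist (convNPow ν n) (gaussianReal 0 1) ≤
      C * √(∫ x, x ^ 4 ∂(convNPow ν n) - 3 + 3 / n) := by
  have hν4 : MemLp id 4 ν := h4.of_convNPow hn.ne'
  have hν1 : ∫ x, x ∂ν = 0 := by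
    rw [integral_id_convNPow (hν4.mono_exponent (by norm_num))] at hmean
    exact (mul_eq_zero.mp hmean).resolve_left (by positivity)
  have hνvar : n * ∫ x, x ^ 2 ∂ν = 1 := by
    rw [← integral_sq_convNPow (hν4.mono_exponent (by norm_num)) hν1, hvar]
  have hν3 := hν4.integrable_abs_pow_of_le (j := 3) (by norm_num)
  have hm4 : ∫ x, x ^ 4 ∂(convNPow ν n) - 3 + 3 / n = n * ∫ x, x ^ 4 ∂ν := by
    have hb : ∫ x, x ^ 2 ∂ν = 1 / n := by
      rw [eq_div_iff (by positivity), mul_comm, hνvar]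
    rw [integral_pow_four_convNPow hν4 hν1, hb]
    field_simp
    ring
  have hBEn := hBE.kolDist_convNPow_le hn hν1 hνvar hν3
  have hC : 0 ≤ C := by
    have hT : 0 < n * ∫ x, |x| ^ 3 ∂ν := mul_pos (by positivity) <|
      integral_abs_pow_three_pos hν3 (hν4.integrable_pow_of_le (by norm_num))
        (pos_of_mul_pos_right (hνvar ▸ one_pos) (Nat.cast_nonneg n))
    exact (mul_nonneg_iff_of_pos_right hT).mp ((kolDist_nonneg _ _).trans hBEn)
  have hCS : n * ∫ x, |x| ^ 3 ∂ν ≤ √(n * ∫ x, x ^ 4 ∂ν) := by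
    refine Real.le_sqrt_of_sq_le ?_
    calc (n * ∫ x, |x| ^ 3 ∂ν) ^ 2 ≤ n ^ 2 * ((∫ x, x ^ 2 ∂ν) * ∫ x, x ^ 4 ∂ν) := by
          rw [mul_pow]
          exact mul_le_mul_of_nonneg_left (sq_integral_abs_pow_three_le hν4) (by positivity)
      _ = n * ∫ x, x ^ 4 ∂ν := by linear_combination (n * ∫ x, x ^ 4 ∂ν) * hνvar
  calc kolDist (convNPow ν n) (gaussianReal 0 1) ≤ C * (n * ∫ x, |x| ^ 3 ∂ν) := hBEn
    _ ≤ C * √(n * ∫ x, x ^ 4 ∂ν) := mul_le_mul_of_nonneg_left hCS hC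
    _ = _ := by rw [hm4]

end BerryEsseenBound

theorem kolmogorov_bound_infinitely_divisible_general
    (C : ℝ)
    -- the Berry–Esseen theorem with constant `C`:
    (hBE : ∀ (ρ : Measure ℝ), IsProbabilityMeasure ρ → ∀ n : ℕ, 0 < n →
      (∫ x, x ∂ρ = 0) → 0 < ∫ x, x ^ 2 ∂ρ →
      Integrable (fun x => |x| ^ 3) ρ →
      kolDist
        (Measure.map
          (fun x => x / (Real.sqrt (∫ x, x ^ 2 ∂ρ) * Real.sqrt n))
          (convNPow ρ n))
        (gaussianReal 0 1) ≤
        C * (∫ x, |x| ^ 3 ∂ρ) /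
          (Real.sqrt (∫ x, x ^ 2 ∂ρ) ^ 3 * Real.sqrt n))
    (μ : Measure ℝ)
    (hID : ∀ n : ℕ, 0 < n → ∃ ν : Measure ℝ,
      IsProbabilityMeasure ν ∧ μ = convNPow ν n)
    (hmean : ∫ x, x ∂μ = 0) (hvar : ∫ x, x ^ 2 ∂μ = 1)
    (h4 : Integrable (fun x => x ^ 4) μ) :
    kolDist μ (gaussianReal 0 1) ≤
      C * Real.sqrt ((∫ x, x ^ 4 ∂μ) - 3) := by
  have hμ4 : MemLp id 4 μ :=
    memLp_of_integrable_norm_pow (by norm_num) aestronglyMeasurable_id <| by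
      simpa [Even.pow_abs (by decide : Even 4)] using h4
  have hbound : ∀ n : ℕ, 0 < n →
      kolDist μ (gaussianReal 0 1) ≤ C * √(∫ x, x ^ 4 ∂μ - 3 + 3 / n) := by
    intro n hn
    obtain ⟨ν, hν, rfl⟩ := hID n hn
    exact BerryEsseenBound.kolDist_convNPow_le_sqrt hBE hn hmean hvar hμ4
  have hlim : Filter.Tendsto (fun n : ℕ => C * √(∫ x, x ^ 4 ∂μ - 3 + 3 / n)) Filter.atTop
      (nhds (C * √(∫ x, x ^ 4 ∂μ - 3))) := by
    simpa using ((tendsto_const_div_atTop_nhds_zero_nat (3 : ℝ)).const_add _).sqrt.const_mul C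
  exact ge_of_tendsto hlim (Filter.eventually_atTop.mpr ⟨1, hbound⟩)

/-- Quantitative fourth moment theorem for infinitely divisible laws. -/
theorem kolmogorov_bound_infinitely_divisible
    (C : ℝ)
    -- the Berry–Esseen theorem with constant `C`:
    (hBE : ∀ (ρ : Measure ℝ), IsProbabilityMeasure ρ → ∀ n : ℕ, 0 < n →
      (∫ x, x ∂ρ = 0) → 0 < ∫ x, x ^ 2 ∂ρ →
      Integrable (fun x => |x| ^ 3) ρ →
      kolDist
        (Measure.map
          (fun x => x / (Real.sqrt (∫ x, x ^ 2 ∂ρ) * Real.sqrt n))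
          (convNPow ρ n))
        (gaussianReal 0 1) ≤
        C * (∫ x, |x| ^ 3 ∂ρ) /
          (Real.sqrt (∫ x, x ^ 2 ∂ρ) ^ 3 * Real.sqrt n))
    (μ : Measure ℝ) [IsProbabilityMeasure μ]
    (hID : ∀ n : ℕ, 0 < n → ∃ ν : Measure ℝ,
      IsProbabilityMeasure ν ∧ μ = convNPow ν n)
    (hmean : ∫ x, x ∂μ = 0) (hvar : ∫ x, x ^ 2 ∂μ = 1)
    (h4 : Integrable (fun x => x ^ 4) μ) :
    kolDist μ (gaussianReal 0 1) ≤
      C * Real.sqrt ((∫ x, x ^ 4 ∂μ) - 3) :=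
  kolmogorov_bound_infinitely_divisible_general C hBE μ hID hmean hvar h4
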